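/- Let ρ_AB be a density matrix on H_A ⊗ H_B (finite-dimensional) with marginals ρ_A, ρ_B, and let M_A, M_B be Hermitian operators on H_A and H_B respectively with M_A ≠ 0 ≠ M_B. Define the truncated correlation C = tr((M_A⊗M_B)·ρ_AB) − tr(M_A·ρ_A)·tr(M_B·ρ_B). Then C² / (2·‖M_A‖²·‖M_B‖²) ≤ I(A:B), where I(A:B) = S(ρ_A) + S(ρ_B) − S(ρ_AB) is the mutual information and ‖·‖ the operator norm. -/

import Mathlib

open scoped Kronecker ComplexOrder Matrix.Norms.L2Operator

/-- Partial trace over the second (B) factor. -/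
noncomputable def ptraceB {m n : ℕ} (ρ : Matrix (Fin m × Fin n) (Fin m × Fin n) ℂ) :
    Matrix (Fin m) (Fin m) ℂ :=
  Matrix.of fun i j => ∑ k, ρ (i, k) (j, k)

/-- Partial trace over the first (A) factor. -/
noncomputable def ptraceA {m n : ℕ} (ρ : Matrix (Fin m × Fin n) (Fin m × Fin n) ℂ) :
    Matrix (Fin n) (Fin n) ℂ :=
  Matrix.of fun i j => ∑ k, ρ (k, i) (k, j)

/-- The von Neumann entropy `S(ρ) = −tr(ρ log ρ)`. -/
noncomputable def vnEntropy {α : Type*} [Fintype α] [DecidableEq α]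
    {ρ : Matrix α α ℂ} (hρ : ρ.IsHermitian) : ℝ :=
  -(ρ * hρ.cfc Real.log).trace.re

/-!
Diagonalise `ρ = U diag(p) U⋆` and `σ = ρ_A ⊗ ρ_B = W diag(q) W⋆` with `W = U_A ⊗ U_B`, and put
`S = U⋆ W`, `X = U⋆ M W` for `M = M_A ⊗ M_B`. Then `tr M(ρ - σ) = ∑ X_ij conj(S_ij) (p_i - q_j)`,
while `I(A:B) = S(ρ‖σ) = ∑ |S_ij|² q_j klFun (p_i / q_j)` with `(|S_ij|²)` doubly stochastic, and
the rows and columns of `(|X_ij|²)` have sums at most `‖M‖² ≤ ‖M_A‖² ‖M_B‖²`. Cauchy–Schwarz with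
weights `(p_i + 2 q_j) / 3` and the scalar bound `3 (t - 1)² / (2 (t + 2)) ≤ klFun t` give
`|tr M(ρ - σ)|² ≤ 2 ‖M‖² S(ρ‖σ)`, the observable form of the quantum Pinsker inequality.
-/

open Real InformationTheory Finset Matrix Unitary

variable {ι κ : Type*} [Fintype ι] [Fintype κ]

lemma hasDerivAt_three_mul_sq_sub_one_div {t : ℝ} (ht : 0 < t) :
    HasDerivAt (fun t : ℝ => 3 * (t - 1) ^ 2 / (2 * (t + 2)))
      (3 * (t - 1) * (t + 5) / (2 * (t + 2) ^ 2)) t := by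
  refine (((((hasDerivAt_id' t).sub_const 1).fun_pow 2).const_mul 3).fun_div
    (((hasDerivAt_id' t).add_const 2).const_mul 2) (by positivity)).congr_deriv ?_
  field_simp
  ring

lemma hasDerivAt_three_mul_sub_one_mul_div {t : ℝ} (ht : 0 < t) :
    HasDerivAt (fun t : ℝ => 3 * (t - 1) * (t + 5) / (2 * (t + 2) ^ 2))
      (t⁻¹ - (t - 1) ^ 2 * (t + 8) / (t * (t + 2) ^ 3)) t := by
  refine (((((hasDerivAt_id' t).sub_const 1).const_mul 3).fun_mul
    ((hasDerivAt_id' t).add_const 5)).fun_div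
      ((((hasDerivAt_id' t).add_const 2).fun_pow 2).const_mul 2) (by positivity)).congr_deriv ?_
  field_simp
  ring

lemma three_mul_sq_sub_one_div_le_klFun {t : ℝ} (ht : 0 < t) :
    3 * (t - 1) ^ 2 / (2 * (t + 2)) ≤ klFun t := by
  set F : ℝ → ℝ := fun t => klFun t - 3 * (t - 1) ^ 2 / (2 * (t + 2))
  set F' : ℝ → ℝ := fun t => log t - 3 * (t - 1) * (t + 5) / (2 * (t + 2) ^ 2)
  have hF : ∀ t ∈ Set.Ioi (0 : ℝ), HasDerivAt F (F' t) t := fun t ht =>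
    (hasDerivAt_klFun (ne_of_gt ht)).sub (hasDerivAt_three_mul_sq_sub_one_div ht)
  have hF' : ∀ t ∈ Set.Ioi (0 : ℝ), HasDerivAt F' ((t - 1) ^ 2 * (t + 8) / (t * (t + 2) ^ 3)) t :=
    fun t ht => ((hasDerivAt_log (ne_of_gt ht)).sub
      (hasDerivAt_three_mul_sub_one_mul_div ht)).congr_deriv (by ring)
  have hconvex : ConvexOn ℝ (Set.Ioi 0) F := by
    refine convexOn_of_hasDerivWithinAt2_nonneg (f' := F')
      (f'' := fun t => (t - 1) ^ 2 * (t + 8) / (t * (t + 2) ^ 3)) (convex_Ioi 0)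
      (fun t ht => (hF t ht).continuousAt.continuousWithinAt) ?_ ?_ ?_ <;> rw [interior_Ioi]
    · exact fun t ht => (hF t ht).hasDerivWithinAt
    · exact fun t ht => (hF' t ht).hasDerivWithinAt
    · intro t (ht : 0 < t)
      positivity
  have hmin : IsMinOn F (Set.Ioi 0) 1 := by
    refine hconvex.isMinOn_of_rightDeriv_eq_zero (by simp) ?_
    rw [(hF 1 (Set.mem_Ioi.2 one_pos)).hasDerivWithinAt.derivWithin (uniqueDiffWithinAt_Ioi 1)]
    norm_num [F']
  simpa [F, klFun_one] using hmin ht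

lemma sq_sub_div_le_two_mul_klFun {x y : ℝ} (hx : 0 < x) (hy : 0 < y) :
    (x - y) ^ 2 / ((x + 2 * y) / 3) ≤ 2 * (y * klFun (x / y)) := by
  have h := three_mul_sq_sub_one_div_le_klFun (div_pos hx hy)
  calc (x - y) ^ 2 / ((x + 2 * y) / 3)
      = 2 * (y * (3 * (x / y - 1) ^ 2 / (2 * (x / y + 2)))) := by field_simp
    _ ≤ 2 * (y * klFun (x / y)) := by gcongr

lemma mul_klFun_div {x y : ℝ} (hx : 0 < x) (hy : 0 < y) :
    y * klFun (x / y) = x * log x - x * log y - x + y := by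
  rw [klFun_apply, log_div hx.ne' hy.ne']
  field_simp
  ring

lemma sum_sum_mul_le_of_sum_le {p q : ι → ℝ} (hp : ∀ i, 0 < p i) (hq : ∀ j, 0 < q j)
    (hp1 : ∑ i, p i = 1) (hq1 : ∑ j, q j = 1) {b : ι → ι → ℝ} {K : ℝ}
    (hbr : ∀ i, ∑ j, b i j ≤ K) (hbc : ∀ j, ∑ i, b i j ≤ K) :
    ∑ i, ∑ j, b i j * ((p i + 2 * q j) / 3) ≤ K := by
  have hrow : ∑ i, ∑ j, b i j * p i ≤ K := calc
    ∑ i, ∑ j, b i j * p i = ∑ i, (∑ j, b i j) * p i := by simp only [sum_mul]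
    _ ≤ ∑ i, K * p i := by gcongr with i; exacts [(hp i).le, hbr i]
    _ = K := by rw [← mul_sum, hp1, mul_one]
  have hcol : ∑ i, ∑ j, b i j * q j ≤ K := calc
    ∑ i, ∑ j, b i j * q j = ∑ j, (∑ i, b i j) * q j := by rw [sum_comm]; simp only [sum_mul]
    _ ≤ ∑ j, K * q j := by gcongr with j; exacts [(hq j).le, hbc j]
    _ = K := by rw [← mul_sum, hq1, mul_one]
  have hsplit : ∑ i, ∑ j, b i j * ((p i + 2 * q j) / 3) =
      (∑ i, ∑ j, b i j * p i) / 3 + 2 * (∑ i, ∑ j, b i j * q j) / 3 := by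
    simp only [sum_div, mul_sum, ← sum_add_distrib]
    congr! 2
    ring
  linarith

theorem norm_sum_mul_sub_sq_le {p q : ι → ℝ} (hp : ∀ i, 0 < p i) (hq : ∀ j, 0 < q j)
    (hp1 : ∑ i, p i = 1) (hq1 : ∑ j, q j = 1) {c b : ι → ι → ℝ} (hc : ∀ i j, 0 ≤ c i j)
    (hb : ∀ i j, 0 ≤ b i j) {K : ℝ} (hbr : ∀ i, ∑ j, b i j ≤ K) (hbc : ∀ j, ∑ i, b i j ≤ K)
    {z : ι → ι → ℂ} (hz : ∀ i j, ‖z i j‖ ^ 2 ≤ c i j * b i j) :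
    ‖∑ i, ∑ j, z i j * ((p i - q j : ℝ) : ℂ)‖ ^ 2 ≤
      2 * K * ∑ i, ∑ j, c i j * (q j * klFun (p i / q j)) := by
  have hw : ∀ i j, 0 < (p i + 2 * q j) / 3 := fun i j => by linarith [hp i, hq j]
  set f : ι × ι → ℝ := fun x => c x.1 x.2 * ((p x.1 - q x.2) ^ 2 / ((p x.1 + 2 * q x.2) / 3))
  set g : ι × ι → ℝ := fun x => b x.1 x.2 * ((p x.1 + 2 * q x.2) / 3)
  have hf0 : ∀ x, 0 ≤ f x := fun x => by have := hw x.1 x.2; have := hc x.1 x.2; positivity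
  have hg0 : ∀ x, 0 ≤ g x := fun x => by have := hw x.1 x.2; have := hb x.1 x.2; positivity
  have hf : ∑ x, f x ≤ 2 * ∑ i, ∑ j, c i j * (q j * klFun (p i / q j)) := by
    simp only [f, Fintype.sum_prod_type, mul_sum]
    refine sum_le_sum fun i _ => sum_le_sum fun j _ => ?_
    calc c i j * ((p i - q j) ^ 2 / ((p i + 2 * q j) / 3))
        ≤ c i j * (2 * (q j * klFun (p i / q j))) := by
          gcongr
          exacts [hc i j, sq_sub_div_le_two_mul_klFun (hp i) (hq j)]
      _ = 2 * (c i j * (q j * klFun (p i / q j))) := by ring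
  have hg : ∑ x, g x ≤ K := by
    simpa only [g, Fintype.sum_prod_type] using sum_sum_mul_le_of_sum_le hp hq hp1 hq1 hbr hbc
  calc ‖∑ i, ∑ j, z i j * ((p i - q j : ℝ) : ℂ)‖ ^ 2
      ≤ (∑ x : ι × ι, ‖z x.1 x.2‖ * |p x.1 - q x.2|) ^ 2 := by
        rw [Fintype.sum_prod_type]
        gcongr
        refine (norm_sum_le _ _).trans (sum_le_sum fun i _ => (norm_sum_le _ _).trans ?_)
        refine sum_le_sum fun j _ => ?_
        rw [norm_mul, Complex.norm_real, Real.norm_eq_abs]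
    _ ≤ (∑ x, f x) * ∑ x, g x := by
        refine sum_sq_le_sum_mul_sum_of_sq_le_mul _ (fun x _ => hf0 x) (fun x _ => hg0 x)
          fun x _ => ?_
        calc (‖z x.1 x.2‖ * |p x.1 - q x.2|) ^ 2 = ‖z x.1 x.2‖ ^ 2 * (p x.1 - q x.2) ^ 2 := by
              rw [mul_pow, sq_abs]
          _ ≤ c x.1 x.2 * b x.1 x.2 * (p x.1 - q x.2) ^ 2 := by gcongr; exact hz _ _
          _ = f x * g x := by
              simp only [f, g]
              rw [mul_mul_mul_comm, div_mul_cancel₀ _ (hw x.1 x.2).ne']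
    _ ≤ (2 * ∑ i, ∑ j, c i j * (q j * klFun (p i / q j))) * K :=
        mul_le_mul hf hg (sum_nonneg fun x _ => hg0 x) ((sum_nonneg fun x _ => hf0 x).trans hf)
    _ = 2 * K * ∑ i, ∑ j, c i j * (q j * klFun (p i / q j)) := by ring

lemma sum_sq_norm_mulVec_le [DecidableEq κ] (A : Matrix ι κ ℂ) (v : κ → ℂ) :
    ∑ i, ‖(A *ᵥ v) i‖ ^ 2 ≤ ‖A‖ ^ 2 * ∑ j, ‖v j‖ ^ 2 := by
  have h := pow_le_pow_left₀ (norm_nonneg _) (A.l2_opNorm_mulVec (WithLp.toLp 2 v)) 2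
  simpa [mul_pow, EuclideanSpace.norm_sq_eq] using h

lemma sum_sq_norm_apply_right_le [DecidableEq κ] (A : Matrix ι κ ℂ) (j : κ) :
    ∑ i, ‖A i j‖ ^ 2 ≤ ‖A‖ ^ 2 := by
  have hj : ∑ l, ‖(Pi.single j 1 : κ → ℂ) l‖ ^ 2 = 1 := by
    rw [sum_eq_single j (fun l _ hl => by simp [hl]) (by simp)]
    simp
  simpa [mulVec_single_one, hj] using sum_sq_norm_mulVec_le A (Pi.single j 1)

lemma sum_sq_norm_apply_left_le [DecidableEq ι] [DecidableEq κ] (A : Matrix ι κ ℂ) (i : ι) :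
    ∑ j, ‖A i j‖ ^ 2 ≤ ‖A‖ ^ 2 := by
  simpa [l2_opNorm_conjTranspose] using sum_sq_norm_apply_right_le Aᴴ i

lemma sum_sq_norm_kronecker_mulVec_le [DecidableEq ι] [DecidableEq κ] (A : Matrix ι ι ℂ)
    (B : Matrix κ κ ℂ) (x : ι × κ → ℂ) :
    ∑ ik, ‖((A ⊗ₖ B) *ᵥ x) ik‖ ^ 2 ≤ (‖A‖ * ‖B‖) ^ 2 * ∑ jl, ‖x jl‖ ^ 2 := by
  set y : ι → κ → ℂ := fun j => B *ᵥ fun l => x (j, l)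
  have hy : ∀ i k, ((A ⊗ₖ B) *ᵥ x) (i, k) = (A *ᵥ fun j => y j k) i := fun i k => by
    simp only [y, mulVec, dotProduct, kroneckerMap_apply, Fintype.sum_prod_type, mul_sum, mul_assoc]
  calc ∑ ik, ‖((A ⊗ₖ B) *ᵥ x) ik‖ ^ 2 = ∑ k, ∑ i, ‖(A *ᵥ fun j => y j k) i‖ ^ 2 := by
        rw [Fintype.sum_prod_type, sum_comm]
        simp only [hy]
    _ ≤ ∑ k, ‖A‖ ^ 2 * ∑ j, ‖y j k‖ ^ 2 := sum_le_sum fun k _ => sum_sq_norm_mulVec_le A _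
    _ = ‖A‖ ^ 2 * ∑ j, ∑ k, ‖(B *ᵥ fun l => x (j, l)) k‖ ^ 2 := by rw [← mul_sum, sum_comm]
    _ ≤ ‖A‖ ^ 2 * ∑ j, ‖B‖ ^ 2 * ∑ l, ‖x (j, l)‖ ^ 2 := by
        gcongr with j
        exact sum_sq_norm_mulVec_le B _
    _ = (‖A‖ * ‖B‖) ^ 2 * ∑ jl, ‖x jl‖ ^ 2 := by
        rw [← mul_sum, Fintype.sum_prod_type]
        ring

lemma l2_opNorm_kronecker_le [DecidableEq ι] [DecidableEq κ] (A : Matrix ι ι ℂ)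
    (B : Matrix κ κ ℂ) : ‖A ⊗ₖ B‖ ≤ ‖A‖ * ‖B‖ := by
  rw [cstar_norm_def]
  refine ContinuousLinearMap.opNorm_le_bound _ (by positivity) fun x => ?_
  refine le_of_sq_le_sq ?_ (by positivity)
  rw [mul_pow, EuclideanSpace.norm_sq_eq, EuclideanSpace.norm_sq_eq]
  simpa using sum_sq_norm_kronecker_mulVec_le A B x

lemma of_sq_norm_mem_doublyStochastic [DecidableEq ι] {S : Matrix ι ι ℂ}
    (hS : S ∈ unitaryGroup ι ℂ) : (of fun i j => ‖S i j‖ ^ 2) ∈ doublyStochastic ℝ ι := by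
  refine mem_doublyStochastic_iff_sum.2 ⟨fun i j => sq_nonneg _, fun i => ?_, fun j => ?_⟩
  · have h : ((∑ j, ‖S i j‖ ^ 2 : ℝ) : ℂ) = (S * star S) i i := by
      simp [mul_apply, Complex.mul_conj']
    rw [mem_unitaryGroup_iff.1 hS, one_apply_eq] at h
    exact_mod_cast h
  · have h : ((∑ i, ‖S i j‖ ^ 2 : ℝ) : ℂ) = (star S * S) j j := by
      simp [mul_apply, Complex.conj_mul']
    rw [mem_unitaryGroup_iff'.1 hS, one_apply_eq] at h
    exact_mod_cast h

lemma im_trace_mul_eq_zero {A B : Matrix ι ι ℂ} (hA : A.IsHermitian) (hB : B.IsHermitian) :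
    (A * B).trace.im = 0 := by
  refine Complex.conj_eq_iff_im.1 ?_
  rw [← Complex.star_def, ← trace_conjTranspose, conjTranspose_mul, hA.eq, hB.eq, trace_mul_comm]

lemma Matrix.IsHermitian.sum_eigenvalues_eq_one [DecidableEq ι] {A : Matrix ι ι ℂ}
    (hA : A.IsHermitian) (h1 : A.trace = 1) : ∑ i, hA.eigenvalues i = 1 := by
  simpa [h1] using (congrArg Complex.re hA.trace_eq_sum_eigenvalues).symm

def kroneckerUnitary [DecidableEq ι] [DecidableEq κ] (U : unitaryGroup ι ℂ)
    (V : unitaryGroup κ ℂ) : unitaryGroup (ι × κ) ℂ :=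
  ⟨(U : Matrix ι ι ℂ) ⊗ₖ (V : Matrix κ κ ℂ), kronecker_mem_unitary U.2 V.2⟩

section ConjDiagonal

variable [DecidableEq ι]

noncomputable def conjDiagonal (U : unitaryGroup ι ℂ) (d : ι → ℝ) : Matrix ι ι ℂ :=
  conjStarAlgAut ℂ _ U (diagonal (RCLike.ofReal ∘ d))

lemma conjDiagonal_eq (U : unitaryGroup ι ℂ) (d : ι → ℝ) :
    conjDiagonal U d =
      (U : Matrix ι ι ℂ) * diagonal (fun i => (d i : ℂ)) * star (U : Matrix ι ι ℂ) :=
  rfl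

lemma Matrix.IsHermitian.eq_conjDiagonal {A : Matrix ι ι ℂ} (hA : A.IsHermitian) :
    A = conjDiagonal hA.eigenvectorUnitary hA.eigenvalues :=
  hA.spectral_theorem

lemma Matrix.IsHermitian.cfc_eq_conjDiagonal {A : Matrix ι ι ℂ} (hA : A.IsHermitian)
    (f : ℝ → ℝ) : hA.cfc f = conjDiagonal hA.eigenvectorUnitary (f ∘ hA.eigenvalues) :=
  rfl

lemma conjDiagonal_add (U : unitaryGroup ι ℂ) (d e : ι → ℝ) :
    conjDiagonal U (d + e) = conjDiagonal U d + conjDiagonal U e := by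
  simp only [conjDiagonal, ← map_add, diagonal_add]
  congr 2
  ext i
  simp

lemma conjDiagonal_mul (U : unitaryGroup ι ℂ) (d e : ι → ℝ) :
    conjDiagonal U (d * e) = conjDiagonal U d * conjDiagonal U e := by
  simp only [conjDiagonal, ← map_mul, diagonal_mul_diagonal]
  congr 2
  ext i
  simp

lemma conjDiagonal_one (U : unitaryGroup ι ℂ) : conjDiagonal U 1 = 1 := by
  simp [conjDiagonal]

lemma conjDiagonal_kronecker [DecidableEq κ] (U : unitaryGroup ι ℂ) (V : unitaryGroup κ ℂ)
    (d : ι → ℝ) (e : κ → ℝ) :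
    conjDiagonal U d ⊗ₖ conjDiagonal V e =
      conjDiagonal (kroneckerUnitary U V) (fun x => d x.1 * e x.2) := by
  simp only [conjDiagonal_eq, kroneckerUnitary, mul_kronecker_mul, diagonal_kronecker_diagonal,
    star_eq_conjTranspose, conjTranspose_kronecker, Complex.ofReal_mul]

lemma conjDiagonal_kroneckerUnitary_add [DecidableEq κ] (U : unitaryGroup ι ℂ)
    (V : unitaryGroup κ ℂ) (d : ι → ℝ) (e : κ → ℝ) :
    conjDiagonal (kroneckerUnitary U V) (fun x => d x.1 + e x.2) =
      conjDiagonal U d ⊗ₖ 1 + 1 ⊗ₖ conjDiagonal V e := by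
  rw [← conjDiagonal_one V, ← conjDiagonal_one U, conjDiagonal_kronecker, conjDiagonal_kronecker,
    ← conjDiagonal_add]
  congr 1
  ext x
  simp

lemma Matrix.IsHermitian.kronecker_eq_conjDiagonal [DecidableEq κ] {A : Matrix ι ι ℂ}
    {B : Matrix κ κ ℂ} (hA : A.IsHermitian) (hB : B.IsHermitian) :
    A ⊗ₖ B = conjDiagonal (kroneckerUnitary hA.eigenvectorUnitary hB.eigenvectorUnitary)
      (fun x => hA.eigenvalues x.1 * hB.eigenvalues x.2) :=
  (congr_arg₂ (· ⊗ₖ ·) hA.eq_conjDiagonal hB.eq_conjDiagonal).trans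
    (conjDiagonal_kronecker _ _ _ _)

lemma trace_conjDiagonal (U : unitaryGroup ι ℂ) (d : ι → ℝ) :
    (conjDiagonal U d).trace = ∑ i, (d i : ℂ) := by
  rw [conjDiagonal_eq, trace_mul_cycle, coe_star_mul_self, one_mul, trace_diagonal]

lemma trace_mul_conjDiagonal (M : Matrix ι ι ℂ) (U : unitaryGroup ι ℂ) (d : ι → ℝ) :
    (M * conjDiagonal U d).trace = ∑ i, (d i : ℂ) * (star (U : Matrix ι ι ℂ) * M * U) i i := by
  rw [conjDiagonal_eq, ← mul_assoc, ← mul_assoc, trace_mul_cycle, ← mul_assoc]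
  simp [trace, mul_diagonal, mul_comm]

lemma trace_conjDiagonal_mul_conjDiagonal (U W : unitaryGroup ι ℂ) (d e : ι → ℝ) :
    (conjDiagonal U d * conjDiagonal W e).trace =
      ∑ i, ∑ j, ((d i * e j * ‖(star (U : Matrix ι ι ℂ) * W) i j‖ ^ 2 : ℝ) : ℂ) := by
  set S : Matrix ι ι ℂ := star (U : Matrix ι ι ℂ) * W
  have h : conjDiagonal U d * conjDiagonal W e = U * (diagonal (fun i => (d i : ℂ)) * S *
      diagonal (fun i => (e i : ℂ)) * star (W : Matrix ι ι ℂ)) := by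
    simp only [conjDiagonal_eq, S, mul_assoc]
  have hS : star (W : Matrix ι ι ℂ) * U = Sᴴ := by
    simp [S, star_eq_conjTranspose, conjTranspose_mul]
  have hDSE : ∀ i j, (diagonal (fun i => (d i : ℂ)) * S * diagonal (fun i => (e i : ℂ))) i j =
      d i * S i j * e j := fun i j => by rw [mul_diagonal, diagonal_mul]
  rw [h, trace_mul_comm, mul_assoc _ (star _), hS]
  simp only [Matrix.trace, Matrix.diag, mul_apply (N := Sᴴ), hDSE, conjTranspose_apply]
  refine sum_congr rfl fun i _ => sum_congr rfl fun j _ => ?_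
  push_cast
  rw [← Complex.mul_conj', Complex.star_def]
  ring

/-- `S(ρ‖σ) = tr ρ (log ρ - log σ)` for `ρ = U diag(p) U⋆` and `σ = W diag(q) W⋆`. Taking the
spectral data as input lets `log σ` be computed in any eigenbasis of `σ`, e.g. `U_A ⊗ U_B`. -/
noncomputable def relEntropy (U W : unitaryGroup ι ℂ) (p q : ι → ℝ) : ℝ :=
  (conjDiagonal U p * (conjDiagonal U (log ∘ p) - conjDiagonal W (log ∘ q))).trace.re

lemma relEntropy_eq_sum {U W : unitaryGroup ι ℂ} {p q : ι → ℝ} (hp : ∀ i, 0 < p i)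
    (hq : ∀ j, 0 < q j) (hpq : ∑ i, p i = ∑ j, q j) :
    relEntropy U W p q =
      ∑ i, ∑ j, ‖(star (U : Matrix ι ι ℂ) * W) i j‖ ^ 2 * (q j * klFun (p i / q j)) := by
  obtain ⟨-, hc_row, hc_col⟩ := mem_doublyStochastic_iff_sum.1 <|
    of_sq_norm_mem_doublyStochastic (mul_mem (star_mem U.2) W.2)
  simp only [of_apply] at hc_row hc_col
  set S : Matrix ι ι ℂ := star (U : Matrix ι ι ℂ) * W
  have hrow (f : ι → ℝ) : ∑ i, ∑ j, ‖S i j‖ ^ 2 * f i = ∑ i, f i := by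
    simp only [← sum_mul, hc_row, one_mul]
  have hcol (g : ι → ℝ) : ∑ i, ∑ j, ‖S i j‖ ^ 2 * g j = ∑ j, g j := by
    rw [sum_comm]
    simp only [← sum_mul, hc_col, one_mul]
  rw [relEntropy, mul_sub, trace_sub, ← conjDiagonal_mul, trace_conjDiagonal,
    trace_conjDiagonal_mul_conjDiagonal, Complex.sub_re, Complex.re_sum, Complex.re_sum]
  simp only [Complex.re_sum, Complex.ofReal_re, Pi.mul_apply, Function.comp_apply,
    mul_klFun_div (hp _) (hq _), mul_add, mul_sub, sum_add_distrib, sum_sub_distrib]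
  rw [hrow (fun i => p i * log (p i)), hrow p, hcol q, hpq]
  simp only [mul_comm]
  ring

lemma relEntropy_nonneg {U W : unitaryGroup ι ℂ} {p q : ι → ℝ} (hp : ∀ i, 0 < p i)
    (hq : ∀ j, 0 < q j) (hpq : ∑ i, p i = ∑ j, q j) : 0 ≤ relEntropy U W p q := by
  rw [relEntropy_eq_sum hp hq hpq]
  exact sum_nonneg fun i _ => sum_nonneg fun j _ =>
    mul_nonneg (sq_nonneg _) (mul_nonneg (hq j).le (klFun_nonneg (div_pos (hp i) (hq j)).le))

theorem norm_trace_sub_sq_le_relEntropy {U W : unitaryGroup ι ℂ} {p q : ι → ℝ}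
    (hp : ∀ i, 0 < p i) (hq : ∀ j, 0 < q j) (hp1 : ∑ i, p i = 1) (hq1 : ∑ j, q j = 1)
    (M : Matrix ι ι ℂ) :
    ‖(M * conjDiagonal U p).trace - (M * conjDiagonal W q).trace‖ ^ 2 ≤
      2 * ‖M‖ ^ 2 * relEntropy U W p q := by
  set S : Matrix ι ι ℂ := star (U : Matrix ι ι ℂ) * W
  set X : Matrix ι ι ℂ := star (U : Matrix ι ι ℂ) * M * W
  have hX : ‖X‖ = ‖M‖ := by
    rw [CStarRing.norm_mul_mem_unitary _ W.2, CStarRing.norm_mem_unitary_mul _ (star_mem U.2)]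
  have hS : Sᴴ = star (W : Matrix ι ι ℂ) * U := by
    rw [← star_eq_conjTranspose, star_mul, star_star]
  have hUMU : star (U : Matrix ι ι ℂ) * M * U = X * Sᴴ := calc
    _ = star (U : Matrix ι ι ℂ) * M * (W * star (W : Matrix ι ι ℂ)) * U := by
      rw [mul_star_self_of_mem W.2, mul_one]
    _ = X * Sᴴ := by simp only [X, hS, mul_assoc]
  have hWMW : star (W : Matrix ι ι ℂ) * M * W = Sᴴ * X := calc
    _ = star (W : Matrix ι ι ℂ) * (U * star (U : Matrix ι ι ℂ)) * M * W := by
      rw [mul_star_self_of_mem U.2, mul_one]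
    _ = Sᴴ * X := by simp only [X, hS, mul_assoc]
  have htrace : (M * conjDiagonal U p).trace - (M * conjDiagonal W q).trace =
      ∑ i, ∑ j, X i j * star (S i j) * ((p i - q j : ℝ) : ℂ) := by
    rw [trace_mul_conjDiagonal, trace_mul_conjDiagonal, hUMU, hWMW]
    simp only [mul_apply, conjTranspose_apply, mul_sum, Complex.ofReal_sub, mul_sub,
      sum_sub_distrib]
    rw [sum_comm (f := fun j i => (q j : ℂ) * (star (S i j) * X i j))]
    congr 1 <;> refine sum_congr rfl fun i _ => sum_congr rfl fun j _ => by ring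
  rw [htrace, relEntropy_eq_sum hp hq (hp1.trans hq1.symm)]
  refine norm_sum_mul_sub_sq_le hp hq hp1 hq1 (fun i j => sq_nonneg _)
    (fun i j => sq_nonneg ‖X i j‖) (fun i => ?_) (fun j => ?_) fun i j => ?_
  · exact hX ▸ sum_sq_norm_apply_left_le X i
  · exact hX ▸ sum_sq_norm_apply_right_le X j
  · rw [norm_mul, norm_star, mul_pow, mul_comm]

end ConjDiagonal

section Bipartite

variable {m n : ℕ}

lemma ptraceB_eq_sum_submatrix (ρ : Matrix (Fin m × Fin n) (Fin m × Fin n) ℂ) :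
    ptraceB ρ = ∑ k, ρ.submatrix (·, k) (·, k) := by
  ext i j
  simp [ptraceB, Matrix.sum_apply]

lemma ptraceA_eq_sum_submatrix (ρ : Matrix (Fin m × Fin n) (Fin m × Fin n) ℂ) :
    ptraceA ρ = ∑ k, ρ.submatrix (k, ·) (k, ·) := by
  ext i j
  simp [ptraceA, Matrix.sum_apply]

lemma Matrix.PosDef.ptraceB [Nonempty (Fin n)] {ρ : Matrix (Fin m × Fin n) (Fin m × Fin n) ℂ}
    (hρ : ρ.PosDef) : (ptraceB ρ).PosDef := by
  rw [ptraceB_eq_sum_submatrix]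
  exact posDef_sum univ_nonempty fun k _ => hρ.submatrix (Prod.mk_left_injective k)

lemma Matrix.PosDef.ptraceA [Nonempty (Fin m)] {ρ : Matrix (Fin m × Fin n) (Fin m × Fin n) ℂ}
    (hρ : ρ.PosDef) : (ptraceA ρ).PosDef := by
  rw [ptraceA_eq_sum_submatrix]
  exact posDef_sum univ_nonempty fun k _ => hρ.submatrix (Prod.mk_right_injective k)

lemma trace_mul_kronecker_one (ρ : Matrix (Fin m × Fin n) (Fin m × Fin n) ℂ)
    (X : Matrix (Fin m) (Fin m) ℂ) :
    (ρ * (X ⊗ₖ (1 : Matrix (Fin n) (Fin n) ℂ))).trace = (ptraceB ρ * X).trace := by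
  simp only [Matrix.trace, diag_apply, mul_apply, kroneckerMap_apply, one_apply, mul_ite, mul_one,
    mul_zero, Fintype.sum_prod_type, sum_ite_eq', mem_univ, ↓reduceIte, ptraceB, of_apply, sum_mul]
  exact sum_congr rfl fun i _ => sum_comm

lemma trace_mul_one_kronecker (ρ : Matrix (Fin m × Fin n) (Fin m × Fin n) ℂ)
    (Y : Matrix (Fin n) (Fin n) ℂ) :
    (ρ * ((1 : Matrix (Fin m) (Fin m) ℂ) ⊗ₖ Y)).trace = (ptraceA ρ * Y).trace := by
  simp only [Matrix.trace, diag_apply, mul_apply, kroneckerMap_apply, one_apply, ite_mul, one_mul,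
    zero_mul, mul_ite, mul_zero, Fintype.sum_prod_type, sum_ite_irrel, sum_const_zero, sum_ite_eq',
    mem_univ, ↓reduceIte, ptraceA, of_apply, sum_mul]
  rw [sum_comm]
  exact sum_congr rfl fun i _ => sum_comm

lemma sum_eigenvalues_ptraceB_mul_ptraceA {ρ : Matrix (Fin m × Fin n) (Fin m × Fin n) ℂ}
    (htr : ρ.trace = 1) (hA : (ptraceB ρ).IsHermitian) (hB : (ptraceA ρ).IsHermitian) :
    ∑ x : Fin m × Fin n, hA.eigenvalues x.1 * hB.eigenvalues x.2 = 1 := by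
  have htrA : (ptraceB ρ).trace = 1 := by simpa [htr] using (trace_mul_kronecker_one ρ 1).symm
  have htrB : (ptraceA ρ).trace = 1 := by simpa [htr] using (trace_mul_one_kronecker ρ 1).symm
  rw [Fintype.sum_prod_type, ← sum_mul_sum, hA.sum_eigenvalues_eq_one htrA,
    hB.sum_eigenvalues_eq_one htrB, one_mul]

lemma mutualInformation_eq_relEntropy {ρ : Matrix (Fin m × Fin n) (Fin m × Fin n) ℂ}
    (hρ : ρ.PosDef) (hρA : (ptraceB ρ).PosDef) (hρB : (ptraceA ρ).PosDef) :
    vnEntropy hρA.1 + vnEntropy hρB.1 - vnEntropy hρ.1 =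
      relEntropy hρ.1.eigenvectorUnitary
        (kroneckerUnitary hρA.1.eigenvectorUnitary hρB.1.eigenvectorUnitary) hρ.1.eigenvalues
        (fun x => hρA.1.eigenvalues x.1 * hρB.1.eigenvalues x.2) := by
  have hlog : conjDiagonal (kroneckerUnitary hρA.1.eigenvectorUnitary hρB.1.eigenvectorUnitary)
      (log ∘ fun x => hρA.1.eigenvalues x.1 * hρB.1.eigenvalues x.2) =
      hρA.1.cfc log ⊗ₖ 1 + 1 ⊗ₖ hρB.1.cfc log := by
    rw [hρA.1.cfc_eq_conjDiagonal, hρB.1.cfc_eq_conjDiagonal,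
      ← conjDiagonal_kroneckerUnitary_add]
    congr 1
    ext x
    exact log_mul (hρA.eigenvalues_pos x.1).ne' (hρB.eigenvalues_pos x.2).ne'
  rw [relEntropy, hlog, ← hρ.1.eq_conjDiagonal, ← hρ.1.cfc_eq_conjDiagonal, mul_sub, mul_add,
    trace_sub, trace_add, trace_mul_kronecker_one, trace_mul_one_kronecker]
  simp only [vnEntropy, Complex.sub_re, Complex.add_re]
  ring

lemma mutualInformation_nonneg {ρ : Matrix (Fin m × Fin n) (Fin m × Fin n) ℂ} (hρ : ρ.PosDef)
    (htr : ρ.trace = 1) (hρA : (ptraceB ρ).PosDef) (hρB : (ptraceA ρ).PosDef) :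
    0 ≤ vnEntropy hρA.1 + vnEntropy hρB.1 - vnEntropy hρ.1 := by
  rw [mutualInformation_eq_relEntropy hρ hρA hρB]
  exact relEntropy_nonneg hρ.eigenvalues_pos
    (fun x => mul_pos (hρA.eigenvalues_pos x.1) (hρB.eigenvalues_pos x.2))
    ((hρ.1.sum_eigenvalues_eq_one htr).trans (sum_eigenvalues_ptraceB_mul_ptraceA htr _ _).symm)

theorem norm_trace_sub_sq_le_mutualInformation {ρ : Matrix (Fin m × Fin n) (Fin m × Fin n) ℂ}
    (hρ : ρ.PosDef) (htr : ρ.trace = 1) (hρA : (ptraceB ρ).PosDef) (hρB : (ptraceA ρ).PosDef)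
    (M : Matrix (Fin m × Fin n) (Fin m × Fin n) ℂ) :
    ‖(M * ρ).trace - (M * (ptraceB ρ ⊗ₖ ptraceA ρ)).trace‖ ^ 2 ≤
      2 * ‖M‖ ^ 2 * (vnEntropy hρA.1 + vnEntropy hρB.1 - vnEntropy hρ.1) := by
  have h := norm_trace_sub_sq_le_relEntropy (U := hρ.1.eigenvectorUnitary)
    (W := kroneckerUnitary hρA.1.eigenvectorUnitary hρB.1.eigenvectorUnitary) hρ.eigenvalues_pos
    (fun x => mul_pos (hρA.eigenvalues_pos x.1) (hρB.eigenvalues_pos x.2))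
    (hρ.1.sum_eigenvalues_eq_one htr) (sum_eigenvalues_ptraceB_mul_ptraceA htr _ _) M
  rwa [← hρ.1.eq_conjDiagonal, ← hρA.1.kronecker_eq_conjDiagonal hρB.1,
    ← mutualInformation_eq_relEntropy hρ hρA hρB] at h

lemma re_trace_kronecker_mul_sub {ρ : Matrix (Fin m × Fin n) (Fin m × Fin n) ℂ}
    {MA : Matrix (Fin m) (Fin m) ℂ} (MB : Matrix (Fin n) (Fin n) ℂ) (hMA : MA.IsHermitian)
    (hA : (ptraceB ρ).IsHermitian) :
    (MA ⊗ₖ MB * ρ).trace.re - (MA * ptraceB ρ).trace.re * (MB * ptraceA ρ).trace.re =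
      ((MA ⊗ₖ MB * ρ).trace - (MA ⊗ₖ MB * (ptraceB ρ ⊗ₖ ptraceA ρ)).trace).re := by
  rw [← mul_kronecker_mul, trace_kronecker, Complex.sub_re, Complex.mul_re,
    im_trace_mul_eq_zero hMA hA, zero_mul, sub_zero]

end Bipartite

theorem stmt16_general {m n : ℕ} (ρAB : Matrix (Fin m × Fin n) (Fin m × Fin n) ℂ)
    (hρAB : ρAB.PosDef) (htr : ρAB.trace = 1)
    (hA : (ptraceB ρAB).IsHermitian) (hB : (ptraceA ρAB).IsHermitian)
    (MA : Matrix (Fin m) (Fin m) ℂ) (MB : Matrix (Fin n) (Fin n) ℂ)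
    (hMA : MA.IsHermitian) :
    ((MA ⊗ₖ MB * ρAB).trace.re -
        (MA * ptraceB ρAB).trace.re * (MB * ptraceA ρAB).trace.re) ^ 2 /
        (2 * ‖MA‖ ^ 2 * ‖MB‖ ^ 2) ≤
      vnEntropy hA + vnEntropy hB - vnEntropy hρAB.1 := by
  obtain ⟨⟨i, k⟩⟩ : Nonempty (Fin m × Fin n) := by
    by_contra h
    simp [not_nonempty_iff.1 h, Matrix.trace] at htr
  have : Nonempty (Fin m) := ⟨i⟩
  have : Nonempty (Fin n) := ⟨k⟩
  have hρA := hρAB.ptraceB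
  have hρB := hρAB.ptraceA
  have hI := mutualInformation_nonneg hρAB htr hρA hρB
  have hnorm : 2 * ‖MA ⊗ₖ MB‖ ^ 2 ≤ 2 * ‖MA‖ ^ 2 * ‖MB‖ ^ 2 := by
    rw [mul_assoc, ← mul_pow]
    gcongr
    exact l2_opNorm_kronecker_le MA MB
  rw [re_trace_kronecker_mul_sub MB hMA hA]
  refine div_le_of_le_mul₀ (by positivity) hI ?_
  rw [mul_comm]
  exact (sq_le_sq.2 ((Complex.abs_re_le_norm _).trans (le_abs_self _))).trans <|
    (norm_trace_sub_sq_le_mutualInformation hρAB htr hρA hρB _).trans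
      (mul_le_mul_of_nonneg_right hnorm hI)

/-- Truncated correlations are controlled by the mutual information:
`C²/(2‖M_A‖²‖M_B‖²) ≤ I(A:B)` where
`C = tr((M_A⊗M_B)ρ_AB) − tr(M_A ρ_A) tr(M_B ρ_B)`. -/
theorem stmt16 {m n : ℕ} (ρAB : Matrix (Fin m × Fin n) (Fin m × Fin n) ℂ)
    (hρAB : ρAB.PosDef) (htr : ρAB.trace = 1)
    (hA : (ptraceB ρAB).IsHermitian) (hB : (ptraceA ρAB).IsHermitian)
    (MA : Matrix (Fin m) (Fin m) ℂ) (MB : Matrix (Fin n) (Fin n) ℂ)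
    (hMA : MA.IsHermitian) (hMB : MB.IsHermitian) (hMA0 : MA ≠ 0) (hMB0 : MB ≠ 0) :
    ((MA ⊗ₖ MB * ρAB).trace.re -
        (MA * ptraceB ρAB).trace.re * (MB * ptraceA ρAB).trace.re) ^ 2 /
        (2 * ‖MA‖ ^ 2 * ‖MB‖ ^ 2) ≤
      vnEntropy hA + vnEntropy hB - vnEntropy hρAB.1 :=
  stmt16_general ρAB hρAB htr hA hB MA MB hMA
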